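/- arXiv:math/0311174 — 4 statements merged into one kernel-verified Lean document; each statement's English description precedes it below -/
import Mathlib

section
/- For all integers p ≥ q ≥ 1 and every integer n with 0 ≤ n ≤ p - q, there exist no integers k ≥ 0 and l with 0 ≤ l ≤ p - 1 such that (q-1)(p+1) + n·p = k·p + l·(p+1) + q. -/
/-- For integers `p ≥ q ≥ 1` and `0 ≤ n ≤ p - q`, there are no integers `k ≥ 0` and
`0 ≤ l ≤ p - 1` with `(q-1)(p+1) + n·p = k·p + l·(p+1) + q`. -/
theorem no_cancellation (p q n : ℤ) (hq : 1 ≤ q) (hpq : q ≤ p)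
    (hn0 : 0 ≤ n) (hn : n ≤ p - q) :
    ¬ ∃ k l : ℤ, 0 ≤ k ∧ 0 ≤ l ∧ l ≤ p - 1 ∧
      (q - 1) * (p + 1) + n * p = k * p + l * (p + 1) + q := by
  rintro ⟨k, l, hk, hl0, hl1, he⟩
  have hp : 0 < p := by linarith
  have h1 : (q - 1 + n - k - l) * p = l + 1 := by linear_combination he
  have hm1 : 1 ≤ q - 1 + n - k - l := by nlinarith
  have hm2 : q - 1 + n - k - l ≤ 1 := by nlinarith
  have hm : q - 1 + n - k - l = 1 := le_antisymm hm2 hm1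
  rw [hm, one_mul] at h1
  linarith
end

section
/- For all integers p ≥ q ≥ 1 and every integer n with 0 ≤ n ≤ p - q, the coefficient of t^{(q-1)(p+1) + n·p} in the polynomial P_{p,q}(t) is nonzero. -/
open Polynomial

/-- For `p ≥ q ≥ 1` and `0 ≤ n ≤ p - q`, the coefficient of `t^((q-1)(p+1) + n·p)`
in the polynomial `P_{p,q}` is nonzero. -/
theorem Ppq_coeff_ne_zero (p q n : ℕ) (hq : 1 ≤ q) (hpq : q ≤ p) (hn : n ≤ p - q)
    (P : Polynomial ℤ)
    (hP : P * ((1 - X ^ p) * (1 - X ^ (p + 1))) = (1 - X ^ q) * (1 - X ^ (p * (p + 1)))) :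
    P.coeff ((q - 1) * (p + 1) + n * p) ≠ 0 := by
  obtain ⟨s, rfl⟩ : ∃ s, q = s + 1 := ⟨q - 1, by omega⟩
  have hp : 0 < p := by omega
  have hsp : s < p := by omega
  -- geometric sum
  set G : Polynomial ℤ := ∑ i ∈ Finset.range p, X ^ ((p + 1) * i) with hGdef
  have hgeom : (1 - X ^ (p + 1)) * G = 1 - X ^ (p * (p + 1)) := by
    have h := geom_sum_mul (X ^ (p + 1) : Polynomial ℤ) p
    have h2 : G = ∑ i ∈ Finset.range p, (X ^ (p + 1) : Polynomial ℤ) ^ i := by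
      rw [hGdef]; apply Finset.sum_congr rfl; intro i _; rw [← pow_mul]
    have h3 : (X ^ (p + 1) : Polynomial ℤ) ^ p = X ^ (p * (p + 1)) := by
      rw [← pow_mul, Nat.mul_comm]
    rw [h2]
    linear_combination -h - (h3 : _)
  -- cancel (1 - X ^ (p+1))
  have hXne : (1 - X ^ (p + 1) : Polynomial ℤ) ≠ 0 := by
    intro h
    have := congrArg (fun f => Polynomial.coeff f 0) h
    simp [coeff_X_pow] at this
  have hR : P * (1 - X ^ p) = (1 - X ^ (s + 1)) * G := by
    apply mul_right_cancel₀ hXne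
    calc P * (1 - X ^ p) * (1 - X ^ (p + 1))
        = P * ((1 - X ^ p) * (1 - X ^ (p + 1))) := by ring
      _ = (1 - X ^ (s + 1)) * (1 - X ^ (p * (p + 1))) := hP
      _ = (1 - X ^ (s + 1)) * ((1 - X ^ (p + 1)) * G) := by rw [hgeom]
      _ = (1 - X ^ (s + 1)) * G * (1 - X ^ (p + 1)) := by ring
  set R : Polynomial ℤ := (1 - X ^ (s + 1)) * G with hRdef
  -- coefficient recursion from P = R + P * X^p
  have hPR : ∀ e, P.coeff e = R.coeff e + if p ≤ e then P.coeff (e - p) else 0 := by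
    intro e
    have h : P = R + P * X ^ p := by linear_combination hR
    conv_lhs => rw [h]
    rw [coeff_add, coeff_mul_X_pow']
  -- coefficients of G
  have hkey : ∀ a b c : ℕ, a < p → c < p → a + b * p = c + c * p → a = c ∧ b = c := by
    intro a b c ha hc h
    have h1 : (a + b * p) % p = a := by
      simp [Nat.add_mul_mod_self_right, Nat.mod_eq_of_lt ha]
    have h2 : (c + c * p) % p = c := by
      simp [Nat.add_mul_mod_self_right, Nat.mod_eq_of_lt hc]
    have hac : a = c := by rw [← h1, h, h2]
    subst hac
    refine ⟨rfl, ?_⟩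
    have hb : b * p = a * p := by omega
    exact Nat.eq_of_mul_eq_mul_right hp hb
  have hG0 : ∀ e : ℕ, (∀ i < p, (p + 1) * i ≠ e) → G.coeff e = 0 := by
    intro e he
    rw [hGdef, finset_sum_coeff]
    apply Finset.sum_eq_zero
    intro j hj
    rw [coeff_X_pow, if_neg]
    exact fun h => he j (Finset.mem_range.1 hj) h.symm
  have hGm : ∀ m ≤ p - 1, G.coeff (s + m * p) = if m = s then 1 else 0 := by
    intro m hm
    by_cases hms : m = s
    · subst hms
      rw [if_pos rfl, hGdef, finset_sum_coeff]
      rw [Finset.sum_eq_single_of_mem m (Finset.mem_range.2 hsp)]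
      · rw [coeff_X_pow, if_pos (by ring)]
      · intro j hj hjm
        rw [coeff_X_pow, if_neg]
        intro h
        have : (p + 1) * j = j + j * p := by ring
        rw [this] at h
        exact hjm (hkey m m j hsp (Finset.mem_range.1 hj) h).1.symm
    · rw [if_neg hms]
      apply hG0
      intro i hi h
      have : (p + 1) * i = i + i * p := by ring
      rw [this] at h
      obtain ⟨h1, h2⟩ := hkey s m i hsp hi h.symm
      omega
  -- coefficient of X^(s+1) * G at s + m*p is 0 for m ≤ p-1
  have hXG : ∀ m ≤ p - 1, (X ^ (s + 1) * G).coeff (s + m * p) = 0 := by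
    intro m hm
    rw [mul_comm, coeff_mul_X_pow']
    by_cases hle : s + 1 ≤ s + m * p
    · rw [if_pos hle]
      apply hG0
      intro i hi h
      have hm0 : m ≠ 0 := by rintro rfl; simp at hle
      obtain ⟨k, rfl⟩ : ∃ k, m = k + 1 := ⟨m - 1, by omega⟩
      have hmk : (k + 1) * p = k * p + p := by ring
      have he : s + (k + 1) * p - (s + 1) = (p - 1) + k * p := by omega
      rw [he] at h
      have h3 : (p + 1) * i = i + i * p := by ring
      rw [h3] at h
      obtain ⟨h4, h5⟩ := hkey (p - 1) k i (by omega) hi h.symm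
      omega
    · rw [if_neg hle]
  have hRm : ∀ m ≤ p - 1, R.coeff (s + m * p) = if m = s then 1 else 0 := by
    intro m hm
    have h : R = G - X ^ (s + 1) * G := by rw [hRdef]; ring
    rw [h, coeff_sub, hGm m hm, hXG m hm, sub_zero]
  -- main induction
  have main : ∀ m ≤ p - 1, P.coeff (s + m * p) = if s ≤ m then 1 else 0 := by
    intro m
    induction m with
    | zero =>
      intro _
      rw [hPR, hRm 0 (by omega)]
      have hnp : ¬ (p ≤ s + 0 * p) := by omega
      rw [if_neg hnp]
      by_cases hs0 : s = 0
      · subst hs0; norm_num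
      · rw [if_neg (fun h => hs0 h.symm), if_neg (by omega)]; ring
    | succ k ih =>
      intro hk
      have hk' : k ≤ p - 1 := by omega
      have he : s + (k + 1) * p - p = s + k * p := by
        have : (k + 1) * p = k * p + p := by ring
        omega
      rw [hPR, if_pos (by nlinarith), he, ih hk', hRm (k + 1) hk]
      by_cases h1 : s ≤ k
      · rw [if_neg (by omega), if_pos h1, if_pos (by omega)]; ring
      · by_cases h2 : k + 1 = s
        · rw [if_pos h2, if_neg (by omega), if_pos (by omega)]; ring
        · rw [if_neg h2, if_neg (by omega), if_neg (by omega)]; ring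
  have htarget : (s + 1 - 1) * (p + 1) + n * p = s + (s + n) * p := by
    have : s + 1 - 1 = s := rfl
    rw [this]; ring
  rw [htarget, main (s + n) (by omega)]
  rw [if_pos (by omega)]
  exact one_ne_zero
end

section
/- For all integers p ≥ q ≥ 1 and every integer n with 0 ≤ n ≤ p - q, the coefficient of t^{(q-1)(p+1) + n·p} in the polynomial P_{p,q}(t) is exactly equal to 1. -/
open Polynomial Finset

/-- For `p ≥ q ≥ 1` and `0 ≤ n ≤ p - q`, the coefficient of `t^((q-1)(p+1) + n·p)`
in the polynomial `P_{p,q}` is exactly `1`. -/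
theorem Ppq_coeff_eq_one (p q n : ℕ) (hq : 1 ≤ q) (hpq : q ≤ p) (hn : n ≤ p - q)
    (P : Polynomial ℤ)
    (hP : P * ((1 - X ^ p) * (1 - X ^ (p + 1))) = (1 - X ^ q) * (1 - X ^ (p * (p + 1)))) :
    P.coeff ((q - 1) * (p + 1) + n * p) = 1 := by
  have hp : 1 ≤ p := hq.trans hpq
  have hnq : n + q ≤ p := by omega
  -- a divisibility extraction principle
  have key2 : ∀ a b r : ℕ, p * a + r = p * b → p ∣ r := by
    intro a b r h
    have hab : a ≤ b := by
      by_contra h'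
      push_neg at h'
      have h2 : p * (b + 1) ≤ p * a := Nat.mul_le_mul le_rfl (by omega)
      have h3 : p * (b + 1) = p * b + p := by ring
      linarith
    obtain ⟨c, rfl⟩ := Nat.exists_eq_add_of_le hab
    have h3 : p * (a + c) = p * a + p * c := by ring
    exact ⟨c, by linarith⟩
  set G : ℤ[X] := ∑ i ∈ range (p + 1), X ^ (p * i) with hGdef
  have hGeom : G * (1 - X ^ p) = 1 - X ^ (p * (p + 1)) := by
    have h1 := geom_sum_mul (X ^ p : ℤ[X]) (p + 1)
    simp only [← pow_mul] at h1
    linear_combination (1 - X ^ p : ℤ[X]) * hGdef - h1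
  have hne : (1 - X ^ p : ℤ[X]) ≠ 0 := by
    intro h
    have h0 : (1 - X ^ p : ℤ[X]).coeff 0 = 1 := by
      rw [coeff_sub, coeff_one, coeff_X_pow]
      have : ¬ (0 = p) := by omega
      simp [this]
    rw [h] at h0
    simp at h0
  have hstar : P * (1 - X ^ (p + 1)) = (1 - X ^ q) * G := by
    have hmul : (P * (1 - X ^ (p + 1)) - (1 - X ^ q) * G) * (1 - X ^ p) = 0 := by
      linear_combination hP - (1 - X ^ q) * hGeom
    rcases mul_eq_zero.mp hmul with h | h
    · exact sub_eq_zero.mp h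
    · exact absurd h hne
  have hrec : ∀ d, P.coeff d - (if p + 1 ≤ d then P.coeff (d - (p + 1)) else 0)
      = G.coeff d - (if q ≤ d then G.coeff (d - q) else 0) := by
    intro d
    have h1 : P - P * X ^ (p + 1) = G - G * X ^ q := by linear_combination hstar
    have h2 := congrArg (fun f : ℤ[X] => f.coeff d) h1
    simpa [coeff_sub, coeff_mul_X_pow'] using h2
  have hGcoeff : ∀ d, G.coeff d = ∑ i ∈ range (p + 1), if p * i = d then 1 else 0 := by
    intro d
    rw [hGdef, finset_sum_coeff]
    refine Finset.sum_congr rfl fun i _ => ?_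
    rw [coeff_X_pow]
    simp [eq_comm]
  have hG0 : ∀ d, (∀ i, i ≤ p → p * i ≠ d) → G.coeff d = 0 := by
    intro d h
    rw [hGcoeff d]
    refine Finset.sum_eq_zero fun i hi => ?_
    rw [if_neg (h i (Nat.lt_succ_iff.mp (mem_range.mp hi)))]
  have hG1 : G.coeff (p * n) = 1 := by
    rw [hGcoeff (p * n)]
    rw [Finset.sum_eq_single n]
    · rw [if_pos rfl]
    · intro i hi hne'
      rw [if_neg]
      intro h
      exact hne' (Nat.eq_of_mul_eq_mul_left hp h)
    · intro h
      exact absurd (mem_range.mpr (by omega)) h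
  -- Lemma B : coefficients along the chain below n*p are zero
  have hB : ∀ d, ∀ l, 1 ≤ l → d + l * (p + 1) = n * p → P.coeff d = 0 := by
    intro d
    induction d using Nat.strong_induction_on with
    | _ d ih =>
      intro l hl hd
      have hl_lt : l < p := by
        by_contra h'
        push_neg at h'
        have e2 : p * (p + 1) ≤ l * (p + 1) := Nat.mul_le_mul h' le_rfl
        have e4 : (n + 1) * p ≤ p * p := Nat.mul_le_mul (by omega) le_rfl
        have e5 : (n + 1) * p = n * p + p := by ring
        have e6 : p * (p + 1) = p * p + p := by ring
        linarith
      have hGd : G.coeff d = 0 := by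
        apply hG0
        intro i hi hieq
        subst hieq
        have hkey : p * (i + l) + l = p * n := by
          have e1 : p * (i + l) + l = p * i + l * (p + 1) := by ring
          have e2 : p * n = n * p := by ring
          linarith
        have hdvd := key2 _ _ _ hkey
        have := Nat.le_of_dvd (by omega) hdvd
        omega
      have hite2 : (if q ≤ d then G.coeff (d - q) else 0) = 0 := by
        split_ifs with hqd
        · apply hG0
          intro i hi hieq
          have hdq : d = p * i + q := (Nat.sub_eq_iff_eq_add hqd).mp hieq.symm
          rw [hdq] at hd
          have hkey : p * (i + l) + (l + q) = p * n := by
            have e1 : p * (i + l) = p * i + l * p := by ring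
            have e2 : l * (p + 1) = l * p + l := by ring
            have e3 : p * n = n * p := by ring
            linarith
          obtain ⟨c, hc⟩ := key2 _ _ _ hkey
          have hc1 : c = 1 := by
            by_contra h'
            rcases Nat.lt_or_ge c 1 with h2 | h2
            · have : c = 0 := by omega
              rw [this, Nat.mul_zero] at hc
              omega
            · have h3 : 2 ≤ c := by omega
              have e : p * 2 ≤ p * c := Nat.mul_le_mul le_rfl h3
              have e2 : p * 2 = p + p := by ring
              linarith
          rw [hc1, Nat.mul_one] at hc
          rw [hc] at hkey
          have e : p * (i + l) + p = p * (i + l + 1) := by ring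
          have hn' : i + l + 1 = n := Nat.eq_of_mul_eq_mul_left hp (by linarith)
          omega
        · rfl
      have hrecd := hrec d
      rw [hGd, hite2, sub_zero] at hrecd
      by_cases hdp : p + 1 ≤ d
      · rw [if_pos hdp] at hrecd
        have hprev : P.coeff (d - (p + 1)) = 0 := by
          apply ih (d - (p + 1)) (by omega) (l + 1) (by omega)
          have e : (l + 1) * (p + 1) = l * (p + 1) + (p + 1) := by ring
          rw [e]
          have e2 : d - (p + 1) + (l * (p + 1) + (p + 1)) = d - (p + 1) + (p + 1) + l * (p + 1) := by
            ring
          rw [e2, Nat.sub_add_cancel hdp]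
          exact hd
        rw [hprev] at hrecd
        linarith
      · rw [if_neg hdp] at hrecd
        linarith
  -- Lemma A : climbing the chain
  have hA : ∀ k, k + 1 ≤ q → P.coeff (n * p + k * (p + 1)) = 1 := by
    intro k
    induction k with
    | zero =>
      intro _
      simp only [Nat.zero_mul, Nat.add_zero]
      have hrec0 := hrec (n * p)
      have hGd : G.coeff (n * p) = 1 := by
        rw [show n * p = p * n from Nat.mul_comm n p]
        exact hG1
      have hite2 : (if q ≤ n * p then G.coeff (n * p - q) else 0) = 0 := by
        split_ifs with hqd
        · apply hG0
          intro i hi hieq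
          have hdq : n * p = p * i + q := (Nat.sub_eq_iff_eq_add hqd).mp hieq.symm
          have hkey : p * i + q = p * n := by
            have e : p * n = n * p := by ring
            linarith
          have hdvd := key2 _ _ _ hkey
          have hqp : p ≤ q := Nat.le_of_dvd (by omega) hdvd
          have hn0 : n = 0 := by omega
          rw [hn0, Nat.zero_mul] at hqd
          omega
        · rfl
      have hite1 : (if p + 1 ≤ n * p then P.coeff (n * p - (p + 1)) else 0) = 0 := by
        split_ifs with hdp
        · apply hB _ 1 le_rfl
          rw [Nat.one_mul, Nat.sub_add_cancel hdp]
        · rfl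
      rw [hite1, hite2, hGd] at hrec0
      linarith
    | succ k ih =>
      intro hk1
      have hd1 : p + 1 ≤ n * p + (k + 1) * (p + 1) := by
        have e : 1 * (p + 1) ≤ (k + 1) * (p + 1) := Nat.mul_le_mul (by omega) le_rfl
        rw [one_mul] at e
        exact le_trans e (Nat.le_add_left _ _)
      have hsub : n * p + (k + 1) * (p + 1) - (p + 1) = n * p + k * (p + 1) := by
        have e : n * p + (k + 1) * (p + 1) = (n * p + k * (p + 1)) + (p + 1) := by ring
        rw [e, Nat.add_sub_cancel]
      have hGd : G.coeff (n * p + (k + 1) * (p + 1)) = 0 := by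
        apply hG0
        intro i hi hieq
        have hkey : p * (n + (k + 1)) + (k + 1) = p * i := by
          have e1 : p * (n + (k + 1)) = n * p + (k + 1) * p := by ring
          have e2 : (k + 1) * (p + 1) = (k + 1) * p + (k + 1) := by ring
          linarith
        have hdvd := key2 _ _ _ hkey
        have := Nat.le_of_dvd (by omega) hdvd
        omega
      have hite2 : (if q ≤ n * p + (k + 1) * (p + 1)
          then G.coeff (n * p + (k + 1) * (p + 1) - q) else 0) = 0 := by
        split_ifs with hqd
        · apply hG0
          intro i hi hieq
          have hdq : n * p + (k + 1) * (p + 1) = p * i + q :=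
            (Nat.sub_eq_iff_eq_add hqd).mp hieq.symm
          obtain ⟨r, hr⟩ : ∃ r, q = (k + 1) + r := ⟨q - (k + 1), by omega⟩
          have hr1 : 1 ≤ r := by omega
          have hkey : p * i + r = p * (n + (k + 1)) := by
            have e1 : p * (n + (k + 1)) = n * p + (k + 1) * p := by ring
            have e2 : (k + 1) * (p + 1) = (k + 1) * p + (k + 1) := by ring
            linarith
          have hdvd := key2 _ _ _ hkey
          have := Nat.le_of_dvd (by omega) hdvd
          omega
        · rfl
      have hrecd := hrec (n * p + (k + 1) * (p + 1))
      rw [if_pos hd1, hsub, hGd, hite2] at hrecd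
      have ihv := ih (by omega)
      linarith
  have hmain := hA (q - 1) (by omega)
  rw [show (q - 1) * (p + 1) + n * p = n * p + (q - 1) * (p + 1) from Nat.add_comm _ _]
  exact hmain
end

section
/- For all integers p ≥ q ≥ 1, the number of nonzero coefficients of the polynomial P_{p,q}(t) is at least p - q + 1. -/
open Polynomial

/-- Indicator of representability: for `0 ≤ n < p(p+1)`, the number `n` is a nonnegative
integer combination of `p` and `p+1` iff `n % p ≤ n / p`. -/
private def Rf (p : ℕ) (n : ℤ) : ℤ :=
  if 0 ≤ n ∧ n % (p : ℤ) ≤ n / (p : ℤ) then 1 else 0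

private lemma Rf_neg {p : ℕ} {n : ℤ} (hn : n < 0) : Rf p n = 0 := by
  unfold Rf
  rw [if_neg]
  rintro ⟨h, -⟩
  omega

private lemma Rf_eval (p : ℕ) (hp : 1 ≤ p) (m b : ℤ) (hb : 0 ≤ b) (hb' : b < (p : ℤ)) :
    Rf p (m * p + b) = if 0 ≤ m ∧ b ≤ m then 1 else 0 := by
  have hp' : (0:ℤ) < (p:ℤ) := by exact_mod_cast hp
  have hmod : (m * (p:ℤ) + b) % (p:ℤ) = b := by
    rw [add_comm, mul_comm, Int.add_mul_emod_self_left, Int.emod_eq_of_lt hb hb']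
  have hdiv : (m * (p:ℤ) + b) / (p:ℤ) = m := by
    rw [add_comm, Int.add_mul_ediv_right _ _ (ne_of_gt hp'),
      Int.ediv_eq_zero_of_lt hb hb', zero_add]
  have hpos : 0 ≤ m * (p:ℤ) + b ↔ 0 ≤ m := by
    constructor
    · intro h
      by_contra hm
      push_neg at hm
      nlinarith
    · intro h
      nlinarith
  unfold Rf
  rw [hmod, hdiv]
  split_ifs with h1 h2 h2
  · rfl
  · exact absurd ⟨hpos.mp h1.1, h1.2⟩ h2
  · exact absurd ⟨hpos.mpr h2.1, h2.2⟩ h1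
  · rfl

private lemma Rf_rec (p : ℕ) (hp : 1 ≤ p) (n : ℤ) (hn : n < (p:ℤ) * ((p:ℤ) + 1)) :
    Rf p n - Rf p (n - p) - Rf p (n - ((p:ℤ) + 1)) + Rf p (n - (2 * (p:ℤ) + 1)) =
      if n = 0 then 1 else 0 := by
  have hp' : (0:ℤ) < (p:ℤ) := by exact_mod_cast hp
  rcases lt_or_ge n 0 with hneg | hpos
  · rw [Rf_neg hneg, Rf_neg (by omega), Rf_neg (by omega), Rf_neg (by omega), if_neg (by omega)]
    ring
  · set b : ℤ := n % (p:ℤ) with hb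
    set m : ℤ := n / (p:ℤ) with hm
    have hbb : 0 ≤ b := Int.emod_nonneg n (ne_of_gt hp')
    have hbp : b < (p:ℤ) := Int.emod_lt_of_pos n hp'
    have hnmb : n = m * (p:ℤ) + b := by
      rw [hb, hm]; rw [mul_comm]; exact (Int.mul_ediv_add_emod n (p:ℤ)).symm
    have hm0 : 0 ≤ m := Int.ediv_nonneg hpos (le_of_lt hp')
    have hmp : m ≤ (p:ℤ) := by nlinarith
    have h0 : Rf p n = if 0 ≤ m ∧ b ≤ m then 1 else 0 := by
      rw [hnmb]; exact Rf_eval p hp m b hbb hbp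
    have h1 : Rf p (n - p) = if 0 ≤ m - 1 ∧ b ≤ m - 1 then 1 else 0 := by
      rw [show n - (p:ℤ) = (m - 1) * (p:ℤ) + b by rw [hnmb]; ring]
      exact Rf_eval p hp (m - 1) b hbb hbp
    rcases le_or_gt 1 b with hb1 | hb1
    · -- the case `b ≥ 1`
      have h2 : Rf p (n - ((p:ℤ) + 1)) = if 0 ≤ m - 1 ∧ b - 1 ≤ m - 1 then 1 else 0 := by
        rw [show n - ((p:ℤ) + 1) = (m - 1) * (p:ℤ) + (b - 1) by rw [hnmb]; ring]
        exact Rf_eval p hp (m - 1) (b - 1) (by omega) (by omega)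
      have h3 : Rf p (n - (2 * (p:ℤ) + 1)) = if 0 ≤ m - 2 ∧ b - 1 ≤ m - 2 then 1 else 0 := by
        rw [show n - (2 * (p:ℤ) + 1) = (m - 2) * (p:ℤ) + (b - 1) by rw [hnmb]; ring]
        exact Rf_eval p hp (m - 2) (b - 1) (by omega) (by omega)
      have hne : n ≠ 0 := by
        intro h
        rw [h] at hb
        simp at hb
        omega
      rw [h0, h1, h2, h3, if_neg hne]
      split_ifs <;> omega
    · -- the case `b = 0`
      have hb0 : b = 0 := by omega
      have h2 : Rf p (n - ((p:ℤ) + 1)) = if 0 ≤ m - 2 ∧ (p:ℤ) - 1 ≤ m - 2 then 1 else 0 := by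
        rw [show n - ((p:ℤ) + 1) = (m - 2) * (p:ℤ) + ((p:ℤ) - 1) by rw [hnmb, hb0]; ring]
        exact Rf_eval p hp (m - 2) ((p:ℤ) - 1) (by omega) (by omega)
      have h3 : Rf p (n - (2 * (p:ℤ) + 1)) = if 0 ≤ m - 3 ∧ (p:ℤ) - 1 ≤ m - 3 then 1 else 0 := by
        rw [show n - (2 * (p:ℤ) + 1) = (m - 3) * (p:ℤ) + ((p:ℤ) - 1) by rw [hnmb, hb0]; ring]
        exact Rf_eval p hp (m - 3) ((p:ℤ) - 1) (by omega) (by omega)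
      have hn0 : n = 0 ↔ m = 0 := by
        constructor
        · intro h
          rw [hnmb, hb0] at h
          simp at h
          rcases h with h | h
          · exact h
          · omega
        · intro h
          rw [hnmb, hb0, h]; ring
      rw [h0, h1, h2, h3, hb0]
      by_cases hm' : m = 0
      · rw [if_pos (hn0.mpr hm')]
        split_ifs <;> omega
      · rw [if_neg (fun h => hm' (hn0.mp h))]
        split_ifs <;> omega

/-- The coefficient function of `P_{p,q}` on `[0, p(p+1))`. -/
private def Sf (p q : ℕ) (n : ℤ) : ℤ := Rf p n - Rf p (n - q)

private lemma Sf_neg {p q : ℕ} {n : ℤ} (hn : n < 0) : Sf p q n = 0 := by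
  unfold Sf
  rw [Rf_neg hn, Rf_neg (by have : (0:ℤ) ≤ (q:ℤ) := Int.natCast_nonneg q; omega)]
  ring

private lemma Sf_rec (p q : ℕ) (hp : 1 ≤ p) (n : ℤ) (hn : n < (p:ℤ) * ((p:ℤ) + 1)) :
    Sf p q n - Sf p q (n - p) - Sf p q (n - ((p:ℤ) + 1)) + Sf p q (n - (2 * (p:ℤ) + 1)) =
      (if n = 0 then 1 else 0) - (if n = (q:ℤ) then 1 else 0) := by
  have hq0 : (0:ℤ) ≤ (q:ℤ) := Int.natCast_nonneg q
  have h1 := Rf_rec p hp n hn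
  have h2 := Rf_rec p hp (n - q) (by omega)
  simp only [sub_eq_zero] at h2
  unfold Sf
  rw [show n - (p:ℤ) - (q:ℤ) = n - (q:ℤ) - (p:ℤ) by ring,
    show n - ((p:ℤ) + 1) - (q:ℤ) = n - (q:ℤ) - ((p:ℤ) + 1) by ring,
    show n - (2 * (p:ℤ) + 1) - (q:ℤ) = n - (q:ℤ) - (2 * (p:ℤ) + 1) by ring]
  linarith [h1, h2]

/-- For `p ≥ q ≥ 1`, the polynomial `P_{p,q}` has at least `p - q + 1` nonzero
coefficients. -/
theorem Ppq_support_card_lower_bound (p q : ℕ) (hq : 1 ≤ q) (hpq : q ≤ p)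
    (P : Polynomial ℤ)
    (hP : P * ((1 - X ^ p) * (1 - X ^ (p + 1))) = (1 - X ^ q) * (1 - X ^ (p * (p + 1)))) :
    p - q + 1 ≤ P.support.card := by
  have hp : 1 ≤ p := le_trans hq hpq
  -- the coefficient-level consequence of `hP`
  have hcoeff : ∀ n : ℕ, P.coeff n
      - (if p ≤ n then P.coeff (n - p) else 0)
      - (if p + 1 ≤ n then P.coeff (n - (p + 1)) else 0)
      + (if 2 * p + 1 ≤ n then P.coeff (n - (2 * p + 1)) else 0)
      = (if n = 0 then 1 else 0) - (if n = q then 1 else 0)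
        - (if n = p * (p + 1) then 1 else 0) + (if n = q + p * (p + 1) then 1 else 0) := by
    intro n
    have expandL : P * ((1 - X ^ p) * (1 - X ^ (p + 1))) =
        P - P * X ^ p - P * X ^ (p + 1) + P * X ^ (2 * p + 1) := by
      ring_nf
    have expandR : ((1 : ℤ[X]) - X ^ q) * (1 - X ^ (p * (p + 1))) =
        1 - X ^ q - X ^ (p * (p + 1)) + X ^ (q + p * (p + 1)) := by
      ring_nf
    have h := congrArg (fun f : ℤ[X] => f.coeff n) hP
    simp only [expandL, expandR, coeff_sub, coeff_add, coeff_one, coeff_X_pow,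
      Polynomial.coeff_mul_X_pow'] at h
    convert h using 2
  obtain ⟨N, hN⟩ : ∃ N : ℕ, N = p * (p + 1) := ⟨_, rfl⟩
  have hNZ : ((N : ℕ) : ℤ) = (p:ℤ) * ((p:ℤ) + 1) := by rw [hN]; push_cast; ring
  have hNp : p * p < N := by rw [hN]; nlinarith
  -- the coefficients of `P` below `N = p(p+1)` are given by `Sf`
  have key : ∀ n : ℕ, n < N → P.coeff n = Sf p q (n : ℤ) := by
    intro n
    induction n using Nat.strong_induction_on with
    | _ n ih =>
      intro hn
      have hnZ : (n : ℤ) < (p:ℤ) * ((p:ℤ) + 1) := by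
        rw [← hNZ]; exact_mod_cast hn
      have hs := Sf_rec p q hp (n : ℤ) hnZ
      have h := hcoeff n
      rw [if_neg (by omega : ¬ n = p * (p + 1)), if_neg (by omega : ¬ n = q + p * (p + 1))] at h
      have e1 : (if p ≤ n then P.coeff (n - p) else 0) = Sf p q ((n:ℤ) - (p:ℤ)) := by
        split_ifs with h1
        · rw [ih (n - p) (by omega) (by omega)]
          congr 1
          omega
        · rw [Sf_neg (by omega)]
      have e2 : (if p + 1 ≤ n then P.coeff (n - (p + 1)) else 0)
          = Sf p q ((n:ℤ) - ((p:ℤ) + 1)) := by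
        split_ifs with h1
        · rw [ih (n - (p + 1)) (by omega) (by omega)]
          congr 1
          omega
        · rw [Sf_neg (by omega)]
      have e3 : (if 2 * p + 1 ≤ n then P.coeff (n - (2 * p + 1)) else 0)
          = Sf p q ((n:ℤ) - (2 * (p:ℤ) + 1)) := by
        split_ifs with h1
        · rw [ih (n - (2 * p + 1)) (by omega) (by omega)]
          congr 1
          omega
        · rw [Sf_neg (by omega)]
      rw [e1, e2, e3] at h
      have c0 : (if n = 0 then (1:ℤ) else 0) = (if (n:ℤ) = 0 then 1 else 0) := by
        split_ifs with a b b <;> omega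
      have cq : (if n = q then (1:ℤ) else 0) = (if (n:ℤ) = (q:ℤ) then 1 else 0) := by
        split_ifs with a b b <;> omega
      rw [c0, cq] at h
      linarith [h, hs]
  -- compute the coefficients at `k * p` for `k ≤ p - q` : they all equal `1`
  have keyval : ∀ k : ℕ, k ≤ p - q → P.coeff (k * p) = 1 := by
    intro k hk
    have hkN : k * p < N := by
      rw [hN]
      have : k * p ≤ p * p := Nat.mul_le_mul (by omega) le_rfl
      nlinarith
    rw [key (k * p) hkN]
    unfold Sf
    have r1 : Rf p ((k * p : ℕ) : ℤ) = 1 := by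
      have := Rf_eval p hp (k : ℤ) 0 le_rfl (by exact_mod_cast hp)
      rw [add_zero] at this
      rw [show (((k * p : ℕ)) : ℤ) = (k:ℤ) * (p:ℤ) by push_cast; ring, this,
        if_pos ⟨Int.natCast_nonneg k, Int.natCast_nonneg k⟩]
    rw [r1]
    rcases Nat.eq_zero_or_pos k with hk0 | hk1
    · rw [hk0]
      rw [Rf_neg (by push_cast; omega)]
      ring
    · have hqp : q < p := by omega
      have r2 : Rf p (((k * p : ℕ) : ℤ) - (q : ℤ)) = 0 := by
        rw [show (((k * p : ℕ)) : ℤ) - (q:ℤ) = ((k:ℤ) - 1) * (p:ℤ) + ((p:ℤ) - (q:ℤ)) by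
          push_cast; ring]
        rw [Rf_eval p hp ((k:ℤ) - 1) ((p:ℤ) - (q:ℤ)) (by omega) (by omega)]
        rw [if_neg]
        rintro ⟨-, hcon⟩
        omega
      rw [r2]
      ring
  -- conclude via an injective image inside the support
  have hsub : (Finset.range (p - q + 1)).image (fun k => k * p) ⊆ P.support := by
    intro x hx
    simp only [Finset.mem_image, Finset.mem_range] at hx
    obtain ⟨k, hk, rfl⟩ := hx
    rw [Polynomial.mem_support_iff, keyval k (by omega)]
    exact one_ne_zero
  calc p - q + 1 = ((Finset.range (p - q + 1)).image (fun k => k * p)).card := by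
        rw [Finset.card_image_of_injective _ (fun a b hab => by
          exact Nat.eq_of_mul_eq_mul_right (by omega) hab), Finset.card_range]
    _ ≤ P.support.card := Finset.card_le_card hsub
end
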